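/- arXiv:1609.09657 — 5 statements merged into one kernel-verified Lean document; each statement's English description precedes it below -/
import Mathlib

section
/- Let $\nu$ be a Borel measure on $(0,\infty)$ with tail $\nu(x,\infty) = x^{-\alpha}\theta(\log x)$ for all $x>0$, where $0<\alpha<1$, $c>1$, and $\theta:\mathbb{R}\to(0,\infty)$ is $\log c$-periodic. Define the measure $\rho$ on $(0,\infty)$ by $\rho(A)=\int_A y\,\nu(dy)$. Then for all $x>0$, $\frac{c^\alpha-1}{c-c^\alpha} \le \frac{\rho(0,x]}{x^{1-\alpha}\theta(\log x)} \le \frac{c^\alpha-1}{1-c^{\alpha-1}}$. -/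
/-!
Cut `(0, x]` into the annuli `A n = (x c^{-(n+1)}, x c^{-n}]`. Periodicity of `θ` makes the tail
at `x c^{-n}` equal to `x^{-α} θ(log x) (c^α)^n`, so `ν (A n) = x^{-α} θ(log x) (c^α)^n (c^α - 1)`.
On `A n` the integrand `y` lies between `x c^{-(n+1)}` and `x c^{-n}`, so `ρ (A n)` is squeezed
between the `n`-th terms of two geometric series of ratio `c^{α-1} < 1`, which differ by the
factor `c`; summing them gives the two bounds.
-/

open MeasureTheory Set Function

lemma Ioc_zero_eq_iUnion_Ioc_div_pow {x c : ℝ} (hx : 0 < x) (hc : 1 < c) :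
    Ioc 0 x = ⋃ n : ℕ, Ioc (x / c ^ (n + 1)) (x / c ^ n) := by
  have hc0 : 0 < c := zero_lt_one.trans hc
  ext y
  simp only [mem_Ioc, mem_iUnion]
  constructor
  · rintro ⟨hy, hyx⟩
    obtain ⟨n, hn, hn'⟩ := exists_nat_pow_near ((one_le_div hy).2 hyx) hc
    refine ⟨n, ?_, ?_⟩
    · rwa [div_lt_iff₀ (pow_pos hc0 _), mul_comm, ← div_lt_iff₀ hy]
    · rwa [le_div_iff₀ (pow_pos hc0 _), mul_comm, ← le_div_iff₀ hy]
  · rintro ⟨n, hlt, hle⟩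
    exact ⟨(by positivity : 0 < x / c ^ (n + 1)).trans hlt,
      hle.trans (div_le_self hx.le (one_le_pow₀ hc.le))⟩

lemma antitone_div_pow {x c : ℝ} (hx : 0 ≤ x) (hc : 1 ≤ c) : Antitone fun n : ℕ ↦ x / c ^ n :=
  fun _ _ hmn ↦ div_le_div_of_nonneg_left hx (pow_pos (zero_lt_one.trans_le hc) _)
    (pow_le_pow_right₀ hc hmn)

lemma setLIntegral_Ioc_zero_eq_tsum (ν : Measure ℝ) (f : ℝ → ENNReal) {x c : ℝ} (hx : 0 < x)
    (hc : 1 < c) :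
    ∫⁻ y in Ioc 0 x, f y ∂ν = ∑' n : ℕ, ∫⁻ y in Ioc (x / c ^ (n + 1)) (x / c ^ n), f y ∂ν := by
  have hdisj := (antitone_div_pow hx.le hc.le).pairwise_disjoint_on_Ioc_succ
  simp only [Order.succ_eq_add_one] at hdisj
  rw [Ioc_zero_eq_iUnion_Ioc_div_pow hx hc, lintegral_iUnion (fun _ ↦ measurableSet_Ioc) hdisj]

lemma setLIntegral_Ioc_ofReal_le (ν : Measure ℝ) (a b : ℝ) :
    ∫⁻ y in Ioc a b, ENNReal.ofReal y ∂ν ≤ ENNReal.ofReal b * ν (Ioc a b) :=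
  calc ∫⁻ y in Ioc a b, ENNReal.ofReal y ∂ν ≤ ∫⁻ _ in Ioc a b, ENNReal.ofReal b ∂ν :=
        setLIntegral_mono measurable_const fun _ hy ↦ ENNReal.ofReal_le_ofReal hy.2
    _ = ENNReal.ofReal b * ν (Ioc a b) := setLIntegral_const _ _

lemma ofReal_mul_le_setLIntegral_Ioc (ν : Measure ℝ) (a b : ℝ) :
    ENNReal.ofReal a * ν (Ioc a b) ≤ ∫⁻ y in Ioc a b, ENNReal.ofReal y ∂ν :=
  calc ENNReal.ofReal a * ν (Ioc a b) = ∫⁻ _ in Ioc a b, ENNReal.ofReal a ∂ν :=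
        (setLIntegral_const _ _).symm
    _ ≤ ∫⁻ y in Ioc a b, ENNReal.ofReal y ∂ν :=
        setLIntegral_mono ENNReal.measurable_ofReal fun _ hy ↦ ENNReal.ofReal_le_ofReal hy.1.le

lemma measure_Ioc_eq_sub_measure_Ioi {X : Type*} [TopologicalSpace X] [LinearOrder X]
    [OrderClosedTopology X] [MeasurableSpace X] [OpensMeasurableSpace X] {ν : Measure X}
    {a b : X} (hab : a ≤ b)
    (hb : ν (Ioi b) ≠ ⊤) : ν (Ioc a b) = ν (Ioi a) - ν (Ioi b) := by
  rw [← Ioi_sdiff_Ioi, measure_sdiff (Ioi_subset_Ioi hab) measurableSet_Ioi.nullMeasurableSet hb]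

lemma ENNReal.tsum_ofReal_mul_geometric {a r : ℝ} (ha : 0 ≤ a) (hr0 : 0 ≤ r) (hr1 : r < 1) :
    ∑' n : ℕ, ENNReal.ofReal (a * r ^ n) = ENNReal.ofReal (a / (1 - r)) := by
  rw [← ENNReal.ofReal_tsum_of_nonneg (fun n ↦ by positivity)
    ((summable_geometric_of_lt_one hr0 hr1).mul_left a), tsum_mul_left,
    tsum_geometric_of_lt_one hr0 hr1, div_eq_mul_inv]

section SemistableTail

def HasSemistableTail (ν : Measure ℝ) (α c : ℝ) (θ : ℝ → ℝ) : Prop :=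
  Periodic θ (Real.log c) ∧
    ∀ x : ℝ, 0 < x → ν (Ioi x) = ENNReal.ofReal (x ^ (-α) * θ (Real.log x))

variable {ν : Measure ℝ} {α c : ℝ} {θ : ℝ → ℝ}

lemma measure_Ioi_div_pow (hc : 0 < c) (hν : HasSemistableTail ν α c θ)
    {x : ℝ} (hx : 0 < x) (n : ℕ) :
    ν (Ioi (x / c ^ n)) = ENNReal.ofReal (x ^ (-α) * θ (Real.log x) * (c ^ α) ^ n) := by
  have hlog : Real.log (x / c ^ n) = Real.log x - n * Real.log c := by
    rw [Real.log_div hx.ne' (pow_ne_zero _ hc.ne'), Real.log_pow]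
  have hpow : (x / c ^ n) ^ (-α) = x ^ (-α) * (c ^ α) ^ n := by
    rw [Real.div_rpow hx.le (by positivity), Real.rpow_neg (pow_nonneg hc.le n), div_inv_eq_mul,
      ← Real.rpow_natCast c n, ← Real.rpow_mul hc.le, mul_comm (n : ℝ), Real.rpow_mul hc.le,
      Real.rpow_natCast]
  rw [hν.2 _ (by positivity), hlog, hν.1.sub_nat_mul_eq, hpow, mul_right_comm]

lemma measure_Ioc_div_pow (hc : 1 < c) (hν : HasSemistableTail ν α c θ)
    {x : ℝ} (hx : 0 < x) (hθx : 0 ≤ θ (Real.log x)) (n : ℕ) :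
    ν (Ioc (x / c ^ (n + 1)) (x / c ^ n))
      = ENNReal.ofReal (x ^ (-α) * θ (Real.log x) * (c ^ α) ^ n * (c ^ α - 1)) := by
  have hc0 : 0 < c := zero_lt_one.trans hc
  rw [measure_Ioc_eq_sub_measure_Ioi (antitone_div_pow hx.le hc.le (n.le_add_right 1))
    (by rw [measure_Ioi_div_pow hc0 hν hx]; exact ENNReal.ofReal_ne_top),
    measure_Ioi_div_pow hc0 hν hx, measure_Ioi_div_pow hc0 hν hx,
    ← ENNReal.ofReal_sub _ (by positivity)]
  ring

lemma ofReal_mul_measure_Ioc_div_pow (hc : 1 < c) (hν : HasSemistableTail ν α c θ)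
    {x : ℝ} (hx : 0 < x) (hθx : 0 ≤ θ (Real.log x)) (n : ℕ) :
    ENNReal.ofReal (x / c ^ n) * ν (Ioc (x / c ^ (n + 1)) (x / c ^ n))
      = ENNReal.ofReal ((c ^ α - 1) * (x ^ (1 - α) * θ (Real.log x)) * (c ^ (α - 1)) ^ n) := by
  have hc0 : 0 < c := zero_lt_one.trans hc
  rw [measure_Ioc_div_pow hc hν hx hθx, ← ENNReal.ofReal_mul (by positivity)]
  congr 1
  rw [Real.rpow_sub hx, Real.rpow_one, Real.rpow_neg hx.le, Real.rpow_sub_one hc0.ne', div_pow]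
  field_simp

lemma tsum_ofReal_mul_measure_Ioc_div_pow (hα0 : 0 ≤ α) (hα1 : α < 1) (hc : 1 < c)
    (hν : HasSemistableTail ν α c θ)
    {x : ℝ} (hx : 0 < x) (hθx : 0 ≤ θ (Real.log x)) :
    ∑' n : ℕ, ENNReal.ofReal (x / c ^ n) * ν (Ioc (x / c ^ (n + 1)) (x / c ^ n))
      = ENNReal.ofReal ((c ^ α - 1) / (1 - c ^ (α - 1)) * (x ^ (1 - α) * θ (Real.log x))) := by
  have hcα : 0 ≤ c ^ α - 1 := sub_nonneg.2 (Real.one_le_rpow hc.le hα0)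
  simp_rw [ofReal_mul_measure_Ioc_div_pow hc hν hx hθx]
  rw [ENNReal.tsum_ofReal_mul_geometric (by positivity) (by positivity)
    (Real.rpow_lt_one_of_one_lt_of_neg hc (by linarith)), div_mul_eq_mul_div]

end SemistableTail

/-- Bounds for `ρ(0,x] = ∫_{(0,x]} y ν(dy)` where `ν` has the semistable tail
`ν(x,∞) = x^{-α} θ(log x)` with `θ` positive and `log c`-periodic. -/
theorem tail_measure_bounds (ν : Measure ℝ) (α c : ℝ) (θ : ℝ → ℝ)
    (hα0 : 0 < α) (hα1 : α < 1) (hc : 1 < c)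
    (hθpos : ∀ y, 0 < θ y)
    (hθper : ∀ y, θ (y + Real.log c) = θ y)
    (htail : ∀ x : ℝ, 0 < x →
      ν (Set.Ioi x) = ENNReal.ofReal (x ^ (-α) * θ (Real.log x))) :
    ∀ x : ℝ, 0 < x →
      ENNReal.ofReal ((c ^ α - 1) / (c - c ^ α) * (x ^ (1 - α) * θ (Real.log x)))
          ≤ ∫⁻ y in Set.Ioc 0 x, ENNReal.ofReal y ∂ν ∧
      ∫⁻ y in Set.Ioc 0 x, ENNReal.ofReal y ∂ν
          ≤ ENNReal.ofReal ((c ^ α - 1) / (1 - c ^ (α - 1)) * (x ^ (1 - α) * θ (Real.log x))) := by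
  intro x hx
  have hc0 : 0 < c := zero_lt_one.trans hc
  have hθx : 0 ≤ θ (Real.log x) := (hθpos _).le
  have hsum := tsum_ofReal_mul_measure_Ioc_div_pow hα0.le hα1 hc ⟨hθper, htail⟩ hx hθx
  rw [setLIntegral_Ioc_zero_eq_tsum ν _ hx hc]
  refine ⟨?_, hsum ▸ ENNReal.tsum_le_tsum fun n ↦ setLIntegral_Ioc_ofReal_le ν _ _⟩
  have hconst : (c ^ α - 1) / (c - c ^ α) = c⁻¹ * ((c ^ α - 1) / (1 - c ^ (α - 1))) := by
    have hcα : c ^ α < c := by simpa using Real.rpow_lt_rpow_of_exponent_lt hc hα1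
    rw [Real.rpow_sub_one hc0.ne']
    field_simp [(sub_pos.2 hcα).ne']
  calc ENNReal.ofReal ((c ^ α - 1) / (c - c ^ α) * (x ^ (1 - α) * θ (Real.log x)))
      = ENNReal.ofReal c⁻¹ *
          ∑' n : ℕ, ENNReal.ofReal (x / c ^ n) * ν (Ioc (x / c ^ (n + 1)) (x / c ^ n)) := by
        rw [hsum, ← ENNReal.ofReal_mul (by positivity), hconst, mul_assoc]
    _ = ∑' n : ℕ, ENNReal.ofReal (x / c ^ (n + 1)) * ν (Ioc (x / c ^ (n + 1)) (x / c ^ n)) := by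
        rw [← ENNReal.tsum_mul_left]
        congr with n
        rw [← mul_assoc, ← ENNReal.ofReal_mul (by positivity), inv_mul_eq_div, div_div, ← pow_succ]
    _ ≤ ∑' n : ℕ, ∫⁻ y in Ioc (x / c ^ (n + 1)) (x / c ^ n), ENNReal.ofReal y ∂ν :=
        ENNReal.tsum_le_tsum fun n ↦ ofReal_mul_le_setLIntegral_Ioc ν _ _
end

section
/- Let $\nu$, $\alpha\in(0,1)$, $c>1$, $\theta$ and $\rho$ be as above (tail $\nu(x,\infty)=x^{-\alpha}\theta(\log x)$ with $\theta$ positive and $\log c$-periodic, $\rho(dy)=y\,\nu(dy)$). Let $\bar\rho(s)=\int_0^\infty e^{-sx}\,\rho(dx)$ be the Laplace transform of $\rho$. Then there exist constants $0<\tilde K_2<\tilde K_1$ such that $\tilde K_2\, s^{1-\alpha}\theta(\log s) \le \bar\rho(1/s) \le \tilde K_1\, s^{1-\alpha}\theta(\log s)$ for all $s>0$. -/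
/-!
The tail `ν (x, ∞) = x ^ (-α) θ (log x)` is antitone in `x`; read along `x = exp y` this says that
`exp (-α y) θ y` is antitone, and together with the `log c`-periodicity it traps `θ` between two
positive constants. Hence `A x ^ (-α) ≤ ν (x, ∞) ≤ B x ^ (-α)`, and it suffices to show that
`ρ̄ (1/s) = ∫ e^{-x/s} x ν(dx)` is of exact order `s ^ (1 - α)`. For the upper bound, split at `s`:
on `(0, s]` bound the integrand by `x` and use the layer-cake formula
`∫_(0,s] x ν(dx) ≤ ∫_0^s ν (t, ∞) dt ≤ B s ^ (1 - α) / (1 - α)` (this needs `α < 1`); on `(s, ∞)`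
use `u e^{-u} ≤ e^{-1}`. For the lower bound, restrict to `(s, K s]` with `K` so large that
`B K ^ (-α) < A`; there the integrand is at least `e^{-K} s` and
`ν (s, K s] ≥ (A - B K ^ (-α)) s ^ (-α)`.
-/

open MeasureTheory Set Filter Real

/-- `ρ̄ (1 / s)`, where `ρ (dx) = x ν (dx)` on `(0, ∞)`. -/
noncomputable def sizeBiasedLaplace (ν : Measure ℝ) (s : ℝ) : ENNReal :=
  ∫⁻ x in Ioi 0, ENNReal.ofReal (exp (-(x / s)) * x) ∂ν

lemma Function.Periodic.bounds_of_antitone_exp_neg_mul {θ : ℝ → ℝ} {α L : ℝ}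
    (hper : Function.Periodic θ L) (hL : 0 < L) (hα : 0 ≤ α) (hθ : ∀ y, 0 ≤ θ y)
    (hanti : Antitone fun y => exp (-(α * y)) * θ y) (y : ℝ) :
    exp (-(α * L)) * θ 0 ≤ θ y ∧ θ y ≤ exp (α * L) * θ 0 := by
  obtain ⟨z, ⟨hz0, hzL⟩, hyz⟩ := hper.exists_mem_Ico₀ hL y
  have hle0 : exp (-(α * z)) * θ z ≤ θ 0 := by simpa using hanti hz0
  have hgeL : exp (-(α * L)) * θ 0 ≤ exp (-(α * z)) * θ z := by
    simpa [hper.eq] using hanti hzL.le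
  rw [hyz]
  constructor
  · exact hgeL.trans (mul_le_of_le_one_left (hθ z) (exp_le_one_iff.2 (by nlinarith)))
  · calc θ z = exp (α * z) * (exp (-(α * z)) * θ z) := by
          rw [← mul_assoc, ← exp_add, add_neg_cancel, exp_zero, one_mul]
      _ ≤ exp (α * L) * θ 0 :=
        mul_le_mul (exp_le_exp.2 (by nlinarith)) hle0 (mul_nonneg (exp_pos _).le (hθ z))
          (exp_pos _).le

lemma antitone_exp_neg_mul_of_measure_Ioi_eq {ν : Measure ℝ} {α : ℝ} {θ : ℝ → ℝ}
    (hθ : ∀ y, 0 ≤ θ y)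
    (htail : ∀ x : ℝ, 0 < x → ν (Ioi x) = ENNReal.ofReal (x ^ (-α) * θ (log x))) :
    Antitone fun y => exp (-(α * y)) * θ y := by
  intro v w hvw
  have hexp (y : ℝ) : exp y ^ (-α) * θ (log (exp y)) = exp (-(α * y)) * θ y := by
    rw [← exp_mul, log_exp]; ring_nf
  have hmono := measure_mono (μ := ν) (Ioi_subset_Ioi (exp_le_exp.2 hvw))
  rw [htail _ (exp_pos w), htail _ (exp_pos v), hexp, hexp] at hmono
  exact (ENNReal.ofReal_le_ofReal_iff (mul_nonneg (exp_pos _).le (hθ v))).1 hmono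

section

variable {ν : Measure ℝ} {α s : ℝ}

lemma setLIntegral_Ioc_ofReal_le_lintegral_measure_Ioi (s : ℝ) :
    ∫⁻ x in Ioc 0 s, ENNReal.ofReal x ∂ν ≤ ∫⁻ t in Ioo 0 s, ν (Ioi t) := by
  have hnonneg : 0 ≤ᵐ[ν.restrict (Ioc 0 s)] fun x => x :=
    ae_restrict_of_forall_mem measurableSet_Ioc fun x hx => hx.1.le
  rw [lintegral_eq_lintegral_meas_lt _ hnonneg aemeasurable_id, ← Ioi_inter_Iio, inter_comm,
    ← Measure.restrict_restrict measurableSet_Iio, ← lintegral_indicator measurableSet_Iio]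
  refine lintegral_mono fun t => ?_
  by_cases hts : t ∈ Iio s
  · rw [indicator_of_mem hts, Measure.restrict_apply' measurableSet_Ioc]
    exact measure_mono inter_subset_left
  · rw [indicator_of_notMem hts, nonpos_iff_eq_zero, Measure.restrict_apply' measurableSet_Ioc,
      measure_mono_null (t := ∅) ?_ measure_empty]
    exact fun a ⟨hta, _, has⟩ => hts (hta.trans_le has)

lemma lintegral_Ioo_rpow_neg (hα : α < 1) (hs : 0 ≤ s) :
    ∫⁻ t in Ioo 0 s, ENNReal.ofReal (t ^ (-α)) = ENNReal.ofReal (s ^ (1 - α) / (1 - α)) := by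
  have hint : IntegrableOn (fun t : ℝ => t ^ (-α)) (Ioo 0 s) := by
    rw [← intervalIntegrable_iff_integrableOn_Ioo_of_le hs]
    exact intervalIntegral.intervalIntegrable_rpow' (by linarith)
  rw [← ofReal_integral_eq_lintegral_ofReal hint
    (ae_restrict_of_forall_mem measurableSet_Ioo fun t ht => rpow_nonneg ht.1.le _),
    ← integral_Ioc_eq_integral_Ioo, ← intervalIntegral.integral_of_le hs,
    integral_rpow (Or.inl (by linarith)), zero_rpow (by linarith), sub_zero, neg_add_eq_sub]

lemma setLIntegral_Ioi_exp_neg_div_mul_le (hs : 0 < s) :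
    ∫⁻ x in Ioi s, ENNReal.ofReal (exp (-(x / s)) * x) ∂ν
      ≤ ENNReal.ofReal (exp (-1) * s) * ν (Ioi s) := by
  rw [← setLIntegral_const]
  refine setLIntegral_mono' measurableSet_Ioi fun x _ => ENNReal.ofReal_le_ofReal ?_
  calc exp (-(x / s)) * x = x / s * exp (-(x / s)) * s := by field_simp
    _ ≤ exp (-1) * s := by gcongr; exact mul_exp_neg_le_exp_neg_one _

lemma setLIntegral_Ioc_exp_neg_div_mul_le {B : ℝ} (hα : α < 1) (hB : 0 ≤ B)
    (htail : ∀ t : ℝ, 0 < t → ν (Ioi t) ≤ ENNReal.ofReal (B * t ^ (-α))) (hs : 0 ≤ s) :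
    ∫⁻ x in Ioc 0 s, ENNReal.ofReal (exp (-(x / s)) * x) ∂ν
      ≤ ENNReal.ofReal (B / (1 - α) * s ^ (1 - α)) := by
  calc ∫⁻ x in Ioc 0 s, ENNReal.ofReal (exp (-(x / s)) * x) ∂ν
      ≤ ∫⁻ x in Ioc 0 s, ENNReal.ofReal x ∂ν := by
        refine setLIntegral_mono' measurableSet_Ioc fun x hx => ENNReal.ofReal_le_ofReal ?_
        exact mul_le_of_le_one_left hx.1.le (exp_le_one_iff.2 (by
          have := div_nonneg hx.1.le hs; linarith))
    _ ≤ ∫⁻ t in Ioo 0 s, ν (Ioi t) := setLIntegral_Ioc_ofReal_le_lintegral_measure_Ioi s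
    _ ≤ ∫⁻ t in Ioo 0 s, ENNReal.ofReal B * ENNReal.ofReal (t ^ (-α)) := by
        refine setLIntegral_mono' measurableSet_Ioo fun t ht => ?_
        rw [← ENNReal.ofReal_mul hB]
        exact htail t ht.1
    _ = ENNReal.ofReal (B / (1 - α) * s ^ (1 - α)) := by
        rw [lintegral_const_mul' _ _ ENNReal.ofReal_ne_top, lintegral_Ioo_rpow_neg hα hs,
          ← ENNReal.ofReal_mul hB, mul_div_assoc', div_mul_eq_mul_div]

lemma sizeBiasedLaplace_le {B : ℝ} (hα : α < 1) (hB : 0 ≤ B)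
    (htail : ∀ t : ℝ, 0 < t → ν (Ioi t) ≤ ENNReal.ofReal (B * t ^ (-α))) (hs : 0 < s) :
    sizeBiasedLaplace ν s ≤ ENNReal.ofReal ((B / (1 - α) + B * exp (-1)) * s ^ (1 - α)) := by
  have hfar : ENNReal.ofReal (exp (-1) * s) * ν (Ioi s)
      ≤ ENNReal.ofReal (B * exp (-1) * s ^ (1 - α)) := by
    calc ENNReal.ofReal (exp (-1) * s) * ν (Ioi s)
        ≤ ENNReal.ofReal (exp (-1) * s) * ENNReal.ofReal (B * s ^ (-α)) := by
          gcongr; exact htail s hs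
      _ = ENNReal.ofReal (B * exp (-1) * s ^ (1 - α)) := by
          rw [← ENNReal.ofReal_mul (by positivity), sub_eq_add_neg, rpow_add hs, rpow_one]
          ring_nf
  rw [sizeBiasedLaplace, ← Ioc_union_Ioi_eq_Ioi hs.le,
    lintegral_union measurableSet_Ioi (Ioc_disjoint_Ioi le_rfl), add_mul,
    ENNReal.ofReal_add (by positivity) (by positivity)]
  exact add_le_add (setLIntegral_Ioc_exp_neg_div_mul_le hα hB htail hs.le)
    ((setLIntegral_Ioi_exp_neg_div_mul_le hs).trans hfar)

lemma ofReal_mul_measure_Ioc_le_sizeBiasedLaplace (K : ℝ) (hs : 0 < s) :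
    ENNReal.ofReal (exp (-K) * s) * ν (Ioc s (K * s)) ≤ sizeBiasedLaplace ν s := by
  rw [← setLIntegral_const]
  refine (setLIntegral_mono' measurableSet_Ioc fun x hx => ENNReal.ofReal_le_ofReal ?_).trans
    (lintegral_mono_set fun x hx => hs.trans hx.1)
  have hxK : x / s ≤ K := (div_le_iff₀ hs).2 hx.2
  exact mul_le_mul (exp_le_exp.2 (neg_le_neg hxK)) hx.1.le hs.le (exp_pos _).le

lemma ofReal_mul_rpow_le_sizeBiasedLaplace {A B K : ℝ} (hB : 0 ≤ B) (hK : 0 < K)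
    (hlow : ∀ t : ℝ, 0 < t → ENNReal.ofReal (A * t ^ (-α)) ≤ ν (Ioi t))
    (hup : ∀ t : ℝ, 0 < t → ν (Ioi t) ≤ ENNReal.ofReal (B * t ^ (-α))) (hs : 0 < s) :
    ENNReal.ofReal (exp (-K) * (A - B * K ^ (-α)) * s ^ (1 - α)) ≤ sizeBiasedLaplace ν s := by
  have hIoc : ENNReal.ofReal (A * s ^ (-α) - B * (K * s) ^ (-α)) ≤ ν (Ioc s (K * s)) := by
    rw [ENNReal.ofReal_sub _ (by positivity), ← Ioi_sdiff_Ioi]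
    exact (tsub_le_tsub (hlow s hs) (hup _ (by positivity))).trans le_measure_sdiff
  refine le_trans ?_ ((mul_le_mul' le_rfl hIoc).trans
    (ofReal_mul_measure_Ioc_le_sizeBiasedLaplace K hs))
  rw [← ENNReal.ofReal_mul (by positivity), mul_rpow hK.le hs.le, sub_eq_add_neg 1 α,
    rpow_add hs, rpow_one]
  exact le_of_eq (by ring_nf)

lemma exists_pos_ofReal_mul_rpow_le_sizeBiasedLaplace {A B : ℝ} (hα : 0 < α) (hA : 0 < A)
    (hB : 0 ≤ B) (hlow : ∀ t : ℝ, 0 < t → ENNReal.ofReal (A * t ^ (-α)) ≤ ν (Ioi t))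
    (hup : ∀ t : ℝ, 0 < t → ν (Ioi t) ≤ ENNReal.ofReal (B * t ^ (-α))) :
    ∃ C > 0, ∀ s : ℝ, 0 < s → ENNReal.ofReal (C * s ^ (1 - α)) ≤ sizeBiasedLaplace ν s := by
  have hsmall : ∀ᶠ K in atTop, B * K ^ (-α) < A := by
    have hlim := (tendsto_rpow_neg_atTop hα).const_mul B
    rw [mul_zero] at hlim
    exact hlim.eventually (gt_mem_nhds hA)
  obtain ⟨K, hKA, hK⟩ := (hsmall.and (eventually_gt_atTop 0)).exists
  exact ⟨_, mul_pos (exp_pos _) (sub_pos.2 hKA),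
    fun s hs => ofReal_mul_rpow_le_sizeBiasedLaplace hB hK hlow hup hs⟩

end

/-- R-O variation bounds for the Laplace transform `ρ̄(1/s) = ∫_0^∞ e^{-x/s} x ν(dx)` of the
size-biased measure `ρ(dx) = x ν(dx)` associated to a semistable Lévy measure `ν`. -/
theorem laplace_transform_RO_bounds (ν : Measure ℝ) (α c : ℝ) (θ : ℝ → ℝ)
    (hα0 : 0 < α) (hα1 : α < 1) (hc : 1 < c)
    (hθpos : ∀ y, 0 < θ y)
    (hθper : ∀ y, θ (y + Real.log c) = θ y)
    (htail : ∀ x : ℝ, 0 < x →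
      ν (Set.Ioi x) = ENNReal.ofReal (x ^ (-α) * θ (Real.log x))) :
    ∃ K1 K2 : ℝ, 0 < K2 ∧ K2 < K1 ∧ ∀ s : ℝ, 0 < s →
      ENNReal.ofReal (K2 * (s ^ (1 - α) * θ (Real.log s)))
          ≤ ∫⁻ x in Set.Ioi (0:ℝ), ENNReal.ofReal (Real.exp (-(x / s)) * x) ∂ν ∧
      ∫⁻ x in Set.Ioi (0:ℝ), ENNReal.ofReal (Real.exp (-(x / s)) * x) ∂ν
          ≤ ENNReal.ofReal (K1 * (s ^ (1 - α) * θ (Real.log s))) := by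
  have hθ : ∀ y, 0 ≤ θ y := fun y => (hθpos y).le
  have hθbounds := Function.Periodic.bounds_of_antitone_exp_neg_mul hθper (log_pos hc) hα0.le hθ
    (antitone_exp_neg_mul_of_measure_Ioi_eq hθ htail)
  set A := exp (-(α * log c)) * θ 0
  set B := exp (α * log c) * θ 0
  have hA : 0 < A := mul_pos (exp_pos _) (hθpos 0)
  have hB : 0 < B := mul_pos (exp_pos _) (hθpos 0)
  have hlow (t : ℝ) (ht : 0 < t) : ENNReal.ofReal (A * t ^ (-α)) ≤ ν (Ioi t) := by
    rw [htail t ht, mul_comm]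
    exact ENNReal.ofReal_le_ofReal (by gcongr; exact (hθbounds _).1)
  have hup (t : ℝ) (ht : 0 < t) : ν (Ioi t) ≤ ENNReal.ofReal (B * t ^ (-α)) := by
    rw [htail t ht, mul_comm B]
    exact ENNReal.ofReal_le_ofReal (by gcongr; exact (hθbounds _).2)
  obtain ⟨C, hC, hCle⟩ := exists_pos_ofReal_mul_rpow_le_sizeBiasedLaplace hα0 hA hB.le hlow hup
  set D := B / (1 - α) + B * exp (-1)
  have hD : 0 < D := by
    have : 0 < 1 - α := by linarith
    positivity
  refine ⟨C / B + D / A, C / B, by positivity, by linarith [div_pos hD hA], fun s hs => ?_⟩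
  obtain ⟨hAθ, hθB⟩ := hθbounds (log s)
  constructor
  · refine le_trans (ENNReal.ofReal_le_ofReal ?_) (hCle s hs)
    calc C / B * (s ^ (1 - α) * θ (log s)) ≤ C / B * (s ^ (1 - α) * B) := by gcongr
      _ = C * s ^ (1 - α) := by field_simp
  · refine (sizeBiasedLaplace_le hα1 hB.le hup hs).trans (ENNReal.ofReal_le_ofReal ?_)
    calc D * s ^ (1 - α) = D / A * (s ^ (1 - α) * A) := by field_simp
      _ ≤ (C / B + D / A) * (s ^ (1 - α) * θ (log s)) := by
        gcongr
        exact le_add_of_nonneg_left (by positivity)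
end

section
/- Let $\mu$ be a probability measure on $[0,\infty)$ with Laplace transform $\bar\mu(s)=\int_0^\infty e^{-sx}\mu(dx)$ satisfying $\bar\mu(s)\le \exp(-K s^{\alpha})$ for all $s>0$, for some constants $K>0$ and $0<\alpha<1$. Then there exists a constant $\tilde K>0$ such that $\mu[0,x]\le \exp\big(-\tilde K\, x^{-\alpha/(1-\alpha)}\big)$ for all $x>0$. -/
/-!
Chernoff's bound `μ[0,x] ≤ e^{sx} μ̄(s) ≤ exp(sx - K s^α)` holds for every `s > 0`. Taking
`s = (K / (2x))^{1/(1-α)}` balances the two terms, `K s^α = 2 s x`, so the exponent becomes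
`-s x = -(K/2)^{1/(1-α)} x^{-α/(1-α)}`.
-/

open MeasureTheory Set

theorem measure_Iic_le_exp_mul_lintegral (μ : Measure ℝ) {s : ℝ} (hs : 0 ≤ s) (x : ℝ) :
    μ (Iic x) ≤
      ENNReal.ofReal (Real.exp (s * x)) * ∫⁻ t, ENNReal.ofReal (Real.exp (-(s * t))) ∂μ := by
  have hweight : ∀ t ∈ Iic x,
      1 ≤ ENNReal.ofReal (Real.exp (s * x)) * ENNReal.ofReal (Real.exp (-(s * t))) := by
    intro t ht
    rw [← ENNReal.ofReal_mul (Real.exp_pos _).le, ← Real.exp_add, ← ENNReal.ofReal_one]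
    refine ENNReal.ofReal_le_ofReal (Real.one_le_exp ?_)
    nlinarith [mem_Iic.mp ht]
  calc μ (Iic x) = ∫⁻ _ in Iic x, 1 ∂μ := (setLIntegral_one _).symm
    _ ≤ ∫⁻ t in Iic x, ENNReal.ofReal (Real.exp (s * x)) *
          ENNReal.ofReal (Real.exp (-(s * t))) ∂μ :=
        setLIntegral_mono (by fun_prop) hweight
    _ ≤ ∫⁻ t, ENNReal.ofReal (Real.exp (s * x)) * ENNReal.ofReal (Real.exp (-(s * t))) ∂μ :=
        setLIntegral_le_lintegral _ _
    _ = _ := lintegral_const_mul _ (by fun_prop)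

section Balance

variable {c x α : ℝ}

theorem mul_rpow_inv_one_sub_eq (hc : 0 < c) (hx : 0 < x) (hα : α ≠ 1) :
    x * (c / x) ^ (1 - α)⁻¹ = c * ((c / x) ^ (1 - α)⁻¹) ^ α := by
  have h1α : 1 - α ≠ 0 := sub_ne_zero.mpr hα.symm
  set s := (c / x) ^ (1 - α)⁻¹
  have hs : 0 < s := by positivity
  have hs1α : s ^ (1 - α) = c / x := Real.rpow_inv_rpow (by positivity) h1α
  calc x * s = x * (s ^ (1 - α) * s ^ α) := by
        rw [← Real.rpow_add hs, sub_add_cancel, Real.rpow_one]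
    _ = c * s ^ α := by rw [hs1α]; field_simp

theorem mul_div_rpow_inv_one_sub (hc : 0 < c) (hx : 0 < x) (hα : α ≠ 1) :
    x * (c / x) ^ (1 - α)⁻¹ = c ^ (1 - α)⁻¹ * x ^ (-(α / (1 - α))) := by
  have h1α : 1 - α ≠ 0 := sub_ne_zero.mpr hα.symm
  have hexp : 1 - (1 - α)⁻¹ = -(α / (1 - α)) := by field_simp; ring
  rw [Real.div_rpow hc.le hx.le, ← hexp, Real.rpow_sub hx, Real.rpow_one]
  field_simp

end Balance

theorem deBruijn_tauberian_general (μ : Measure ℝ) (K α : ℝ) (hK : 0 < K) (hα1 : α < 1)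
    (hLT : ∀ s : ℝ, 0 < s →
      ∫⁻ t, ENNReal.ofReal (Real.exp (-(s * t))) ∂μ
        ≤ ENNReal.ofReal (Real.exp (-(K * s ^ α)))) :
    ∃ K' : ℝ, 0 < K' ∧ ∀ x : ℝ, 0 < x →
      μ (Set.Icc 0 x) ≤ ENNReal.ofReal (Real.exp (-(K' * x ^ (-(α / (1 - α)))))) := by
  have hc : 0 < K / 2 := by positivity
  refine ⟨(K / 2) ^ (1 - α)⁻¹, by positivity, fun x hx => ?_⟩
  set s := (K / 2 / x) ^ (1 - α)⁻¹
  have hs : 0 < s := by positivity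
  have hbalance : K * s ^ α = 2 * (x * s) := by
    rw [mul_rpow_inv_one_sub_eq hc hx hα1.ne]; ring
  calc μ (Icc 0 x) ≤ μ (Iic x) := measure_mono Icc_subset_Iic_self
    _ ≤ ENNReal.ofReal (Real.exp (s * x)) * ENNReal.ofReal (Real.exp (-(K * s ^ α))) :=
        (measure_Iic_le_exp_mul_lintegral μ hs.le x).trans (mul_le_mul_right (hLT s hs) _)
    _ = ENNReal.ofReal (Real.exp (-(x * s))) := by
        rw [← ENNReal.ofReal_mul (Real.exp_pos _).le, ← Real.exp_add, hbalance]; ring_nf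
    _ = _ := by rw [mul_div_rpow_inv_one_sub hc hx hα1.ne]

/-- De Bruijn-type Tauberian bound: an exponential bound `μ̄(s) ≤ exp(-K s^α)` on the Laplace
transform of a probability measure on `[0,∞)` gives a stretched-exponential lower-tail bound. -/
theorem deBruijn_tauberian (μ : Measure ℝ) [IsProbabilityMeasure μ]
    (hsupp : μ (Set.Iio (0:ℝ)) = 0) (K α : ℝ) (hK : 0 < K) (hα0 : 0 < α) (hα1 : α < 1)
    (hLT : ∀ s : ℝ, 0 < s →
      ∫⁻ t, ENNReal.ofReal (Real.exp (-(s * t))) ∂μ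
        ≤ ENNReal.ofReal (Real.exp (-(K * s ^ α)))) :
    ∃ K' : ℝ, 0 < K' ∧ ∀ x : ℝ, 0 < x →
      μ (Set.Icc 0 x) ≤ ENNReal.ofReal (Real.exp (-(K' * x ^ (-(α / (1 - α)))))) :=
  deBruijn_tauberian_general μ K α hK hα1 hLT
end

section
/- Let $X=\{X(t)\}_{t\ge0}$ be a $(c^{1/\alpha},c)$-semistable subordinator with $0<\alpha<1$ and $c>1$. Then there exists a constant $\tilde K_5>0$ such that $\mathbb{P}(X(r)\le x)\le \exp\big(-\tilde K_5\, x^{-\alpha/(1-\alpha)}\big)$ for all $r\in[1,c]$ and all $x>0$. -/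
open MeasureTheory ProbabilityTheory Set

noncomputable section

variable {Ω : Type*} [MeasurableSpace Ω]

/-- The process `X` has càdlàg paths on `[0,∞)` almost surely. -/
def HasCadlagPaths {E : Type*} [TopologicalSpace E] (P : Measure Ω) (X : ℝ → Ω → E) : Prop :=
  ∀ᵐ ω ∂P,
    (∀ t : ℝ, 0 ≤ t →
      Filter.Tendsto (fun s => X s ω) (nhdsWithin t (Set.Ici t)) (nhds (X t ω))) ∧
    (∀ t : ℝ, 0 < t →
      ∃ l, Filter.Tendsto (fun s => X s ω) (nhdsWithin t (Set.Iio t)) (nhds l))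

/-- `X` is a Lévy process under `P`: measurable, starts at `0`, has stationary and
independent increments, and càdlàg paths. -/
def IsLevyProcess {E : Type*} [NormedAddCommGroup E] [MeasurableSpace E] [BorelSpace E]
    (P : Measure Ω) (X : ℝ → Ω → E) : Prop :=
  (∀ t, Measurable (X t)) ∧
  (∀ᵐ ω ∂P, X 0 ω = 0) ∧
  (∀ s t : ℝ, 0 ≤ s → 0 ≤ t →
    Measure.map (fun ω => X (s + t) ω - X s ω) P = Measure.map (X t) P) ∧
  (∀ (n : ℕ) (t : Fin (n + 1) → ℝ), 0 ≤ t 0 → Monotone t →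
    iIndepFun
      (fun (i : Fin n) ω => X (t i.succ) ω - X (t i.castSucc) ω) P) ∧
  HasCadlagPaths P X

/-- All finite-dimensional distributions of `{X(ct)}` coincide with those of `{T(X(t))}`. -/
def FDScaling {E : Type*} [NormedAddCommGroup E] [MeasurableSpace E]
    (P : Measure Ω) (X : ℝ → Ω → E) (c : ℝ) (T : E → E) : Prop :=
  ∀ (n : ℕ) (t : Fin n → ℝ), (∀ i, 0 ≤ t i) →
    Measure.map (fun ω (i : Fin n) => X (c * t i) ω) P
      = Measure.map (fun ω (i : Fin n) => T (X (t i) ω)) P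

/-- A measure on `ℝ^d` is full if it is not concentrated on any hyperplane. -/
def IsFull {d : ℕ} (μ : Measure (EuclideanSpace ℝ (Fin d))) : Prop :=
  ∀ (v : EuclideanSpace ℝ (Fin d)) (b : ℝ), v ≠ 0 →
    μ {x | (inner ℝ v x : ℝ) = b} ≠ μ Set.univ

/-- `X` is a `(c^A, c)`-operator semistable Lévy process with exponent `A`. -/
def IsOpSemistable {d : ℕ} (P : Measure Ω) (X : ℝ → Ω → EuclideanSpace ℝ (Fin d)) (c : ℝ)
    (A : EuclideanSpace ℝ (Fin d) →L[ℝ] EuclideanSpace ℝ (Fin d)) : Prop :=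
  IsLevyProcess P X ∧ IsFull (Measure.map (X 1) P) ∧
  FDScaling P X c (fun x => NormedSpace.exp ((Real.log c) • A) x)

/-- The principal spectral block of the exponent `A` is the subspace `V`, on which `A` acts
diagonally as `α1⁻¹ • id`; the complementary invariant subspace `Vᗮ` corresponds to
eigenvalues with strictly larger real parts (expressed through the growth of `t^A` on `Vᗮ`). -/
def PrincipalDiagonal {d : ℕ} (A : EuclideanSpace ℝ (Fin d) →L[ℝ] EuclideanSpace ℝ (Fin d))
    (V : Submodule ℝ (EuclideanSpace ℝ (Fin d))) (α1 : ℝ) : Prop :=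
  (∀ x ∈ V, A x = α1⁻¹ • x) ∧ (∀ x ∈ Vᗮ, A x ∈ Vᗮ) ∧
  (∃ a2 : ℝ, α1⁻¹ < a2 ∧ ∀ δ : ℝ, 0 < δ → ∃ K : ℝ, 0 < K ∧
    ∀ t ∈ Set.Ioc (0:ℝ) 1, ∀ x ∈ Vᗮ,
      ‖NormedSpace.exp ((Real.log t) • A) x‖ ≤ K * t ^ (a2 - δ) * ‖x‖)

/-- `X(1)` has a continuous density `p` with `p 0 > 0` (type `A`). -/
def IsTypeA {d : ℕ} (P : Measure Ω) (X : ℝ → Ω → EuclideanSpace ℝ (Fin d)) : Prop :=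
  ∃ p : EuclideanSpace ℝ (Fin d) → ℝ, Continuous p ∧
    Measure.map (X 1) P = volume.withDensity (fun x => ENNReal.ofReal (p x)) ∧ 0 < p 0

/-- `X(1)` has a continuous density `p` with `p 0 = 0` (type `B`). -/
def IsTypeB {d : ℕ} (P : Measure Ω) (X : ℝ → Ω → EuclideanSpace ℝ (Fin d)) : Prop :=
  ∃ p : EuclideanSpace ℝ (Fin d) → ℝ, Continuous p ∧
    Measure.map (X 1) P = volume.withDensity (fun x => ENNReal.ofReal (p x)) ∧ p 0 = 0

/-- Sojourn time of `X` in the closed ball `B(0,a)` up to time `s`. -/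
def sojourn {d : ℕ} (X : ℝ → Ω → EuclideanSpace ℝ (Fin d)) (a s : ℝ) (ω : Ω) : ℝ :=
  (volume {t : ℝ | t ∈ Set.Icc 0 s ∧ ‖X t ω‖ ≤ a}).toReal

/-!
Put `b = c ^ (1/α - 1)` and `γ = α / (1 - α)`, so that `c ^ (1/α) = c * b` and `b ^ γ = c`.
With `p = E e^{-X(1)} < 1`, scaling, monotonicity of paths and independent stationary increments
give `E e^{-(cb)^n X(1)} = E e^{-X(c^n)} ≤ p ^ ⌊c^n⌋`, so the Chernoff bound yields
`P(X(1) ≤ x) ≤ exp((cb)^n x + ⌊c^n⌋ log p)`; taking `b^n ≈ -log p / (4x)` makes this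
`exp(-K x^{-γ})` for small `x`. For large `x` the claim reduces to a tail lower bound
`P(X(1) > y) ≥ K y^{-γ}`, which comes from the union bound over unit increments
`P(X(c^n) > (cb)^n y₀) ≤ ⌈c^n⌉ P(X(1) > (cb)^n y₀ / ⌈c^n⌉)`. Finally `X(r) ≥ X(1)` for `r ≥ 1`.
-/

open Real

lemma half_lt_natFloor {t : ℝ} (ht : 1 ≤ t) : t / 2 < ⌊t⌋₊ := by
  have h1 : (1 : ℝ) ≤ ⌊t⌋₊ := by exact_mod_cast Nat.le_floor (by exact_mod_cast ht)
  linarith [Nat.lt_floor_add_one t]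

lemma exists_pow_near_rpow {b γ t : ℝ} (hb : 1 < b) (hγ : 0 < γ) (ht : 1 ≤ t) :
    ∃ n : ℕ, b ^ n ≤ t ∧ t < b ^ (n + 1) ∧ (b ^ γ) ^ n ≤ t ^ γ ∧ t ^ γ < (b ^ γ) ^ (n + 1) := by
  obtain ⟨n, hle, hlt⟩ := exists_nat_pow_near ht hb
  have hb0 : 0 ≤ b := by linarith
  refine ⟨n, hle, hlt, ?_, ?_⟩
  · rw [rpow_pow_comm hb0]
    exact rpow_le_rpow (by positivity) hle hγ.le
  · rw [rpow_pow_comm hb0]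
    exact rpow_lt_rpow (by positivity) hlt hγ

section Arithmetic

variable {b c γ : ℝ}

lemma exists_pow_mul_sub_floor_le (hb : 1 < b) (hγ : 0 < γ) (hbγ : b ^ γ = c) {κ x : ℝ}
    (hx : 0 < x) (hxκ : x ≤ κ / 4) :
    ∃ n : ℕ, (c * b) ^ n * x - κ * ⌊c ^ n⌋₊ ≤ -(κ / (4 * c) * (κ / 4) ^ γ * x ^ (-γ)) := by
  have hκ : 0 < κ := by linarith
  have hc : 1 < c := hbγ ▸ one_lt_rpow hb hγ
  obtain ⟨n, hle, -, -, hlt⟩ := exists_pow_near_rpow hb hγ (t := κ / (4 * x))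
    (by rw [le_div_iff₀ (by positivity)]; linarith)
  rw [hbγ] at hlt
  refine ⟨n, ?_⟩
  have hcn : 1 ≤ c ^ n := one_le_pow₀ hc.le
  have hfloor := half_lt_natFloor hcn
  have hbx : b ^ n * x ≤ κ / 4 := by
    rw [le_div_iff₀ (by positivity)] at hle
    linarith
  have htγ : (κ / (4 * x)) ^ γ = (κ / 4) ^ γ * x ^ (-γ) := by
    rw [div_mul_eq_div_div, div_eq_mul_inv _ x, mul_rpow (by positivity) (by positivity),
      inv_rpow hx.le, rpow_neg hx.le]
  rw [htγ, pow_succ] at hlt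
  have key : (κ / 4) ^ γ * x ^ (-γ) / c < c ^ n := by rwa [div_lt_iff₀ (by linarith)]
  calc (c * b) ^ n * x - κ * ⌊c ^ n⌋₊ ≤ c ^ n * (κ / 4) - κ * (c ^ n / 2) := by
        rw [mul_pow, mul_assoc]
        gcongr
    _ = -(κ / 4 * c ^ n) := by ring
    _ ≤ -(κ / (4 * c) * (κ / 4) ^ γ * x ^ (-γ)) := by
        rw [neg_le_neg_iff]
        calc κ / (4 * c) * (κ / 4) ^ γ * x ^ (-γ) = κ / 4 * ((κ / 4) ^ γ * x ^ (-γ) / c) := by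
              field_simp
          _ ≤ κ / 4 * c ^ n := by gcongr

lemma exists_lt_pow_mul_div_ceil (hb : 1 < b) (hγ : 0 < γ) (hbγ : b ^ γ = c) {y₀ y : ℝ}
    (hy₀ : 0 < y₀) (hy : y₀ / 2 ≤ y) :
    ∃ n : ℕ, y < (c * b) ^ n * y₀ / ⌈c ^ n⌉₊ ∧ (⌈c ^ n⌉₊ : ℝ) ≤ 2 * c * (2 / y₀) ^ γ * y ^ γ := by
  have hc : 1 < c := hbγ ▸ one_lt_rpow hb hγ
  have hy0 : 0 < y := by linarith
  obtain ⟨m, -, hlt, hle, -⟩ := exists_pow_near_rpow hb hγ (t := 2 * y / y₀)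
    (by rw [le_div_iff₀ hy₀]; linarith)
  rw [hbγ] at hle
  have hcn : 1 ≤ c ^ (m + 1) := one_le_pow₀ hc.le
  have hceil : (⌈c ^ (m + 1)⌉₊ : ℝ) ≤ 2 * c ^ (m + 1) := Nat.ceil_le_two_mul (by linarith)
  refine ⟨m + 1, ?_, ?_⟩
  · have hceil_pos : (0 : ℝ) < ⌈c ^ (m + 1)⌉₊ := by
      exact_mod_cast Nat.ceil_pos.mpr (by linarith)
    rw [lt_div_iff₀ hceil_pos, mul_pow]
    rw [div_lt_iff₀ hy₀] at hlt
    calc y * ⌈c ^ (m + 1)⌉₊ ≤ y * (2 * c ^ (m + 1)) := by gcongr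
      _ = c ^ (m + 1) * (2 * y) := by ring
      _ < c ^ (m + 1) * (b ^ (m + 1) * y₀) := by gcongr
      _ = c ^ (m + 1) * b ^ (m + 1) * y₀ := by ring
  · have htγ : (2 * y / y₀) ^ γ = (2 / y₀) ^ γ * y ^ γ := by
      rw [mul_div_right_comm, mul_rpow (by positivity) hy0.le]
    calc (⌈c ^ (m + 1)⌉₊ : ℝ) ≤ 2 * c ^ (m + 1) := hceil
      _ = 2 * c * c ^ m := by ring
      _ ≤ 2 * c * (2 / y₀) ^ γ * y ^ γ := by
          rw [mul_assoc _ ((2 / y₀) ^ γ), ← htγ]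
          gcongr

end Arithmetic

section Probability

variable {μ : Measure Ω} {f : Ω → ℝ}

lemma integrable_exp_mul_of_nonpos [IsFiniteMeasure μ] (hf : AEMeasurable f μ)
    (hf0 : 0 ≤ᵐ[μ] f) {u : ℝ} (hu : u ≤ 0) : Integrable (fun ω => exp (u * f ω)) μ := by
  refine (integrable_const (1 : ℝ)).mono' (hf.const_mul u).exp.aestronglyMeasurable ?_
  filter_upwards [hf0] with ω hω
  rw [norm_of_nonneg (exp_pos _).le, exp_le_one_iff]
  exact mul_nonpos_of_nonpos_of_nonneg hu hω

lemma mgf_lt_one [IsProbabilityMeasure μ] (hf : AEMeasurable f μ) (hf0 : ∀ᵐ ω ∂μ, 0 < f ω)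
    {u : ℝ} (hu : u < 0) : mgf f μ u < 1 := by
  have hint := integrable_exp_mul_of_nonpos hf (hf0.mono fun _ h => h.le) hu.le
  have hlt : ∀ᵐ ω ∂μ, exp (u * f ω) < 1 := by
    filter_upwards [hf0] with ω hω
    exact exp_lt_one_iff.mpr (mul_neg_of_neg_of_pos hu hω)
  have hle : (fun ω => exp (u * f ω)) ≤ᵐ[μ] fun _ => 1 := hlt.mono fun _ h => h.le
  refine (integral_mono_ae hint (integrable_const 1) hle |>.trans_eq (by simp)).lt_of_ne ?_
  intro heq
  have hae := (integral_eq_iff_of_ae_le hint (integrable_const 1) hle).mp (heq.trans (by simp))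
  have : ∀ᵐ ω ∂μ, False := by
    filter_upwards [hae, hlt] with ω h1 h2
    exact h2.ne h1
  exact NeZero.ne μ (by simpa using this)

lemma exists_measure_lt_pos [NeZero μ] (hf0 : ∀ᵐ ω ∂μ, 0 < f ω) {ε : ℝ} (hε : 0 < ε) :
    ∃ y ∈ Ioo 0 ε, 0 < μ {ω | y < f ω} := by
  by_contra! h
  have hnull : μ (⋃ k : ℕ, {ω | ε / (k + 2) < f ω}) = 0 :=
    measure_iUnion_null fun k => nonpos_iff_eq_zero.mp (h _ ⟨by positivity,
      div_lt_self hε (by linarith [k.cast_nonneg (α := ℝ)])⟩)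
  have : ∀ᵐ ω ∂μ, False := by
    filter_upwards [hf0, measure_eq_zero_iff_ae_notMem.mp hnull] with ω hω hω'
    obtain ⟨k, hk⟩ := exists_nat_gt (ε / f ω)
    refine hω' (mem_iUnion.mpr ⟨k, ?_⟩)
    rw [mem_ofPred_eq, div_lt_iff₀ (by positivity)]
    rw [div_lt_iff₀ hω] at hk
    nlinarith
  exact NeZero.ne μ (by simpa using this)

lemma measureReal_le_le_exp_neg [IsProbabilityMeasure μ] (hf : Measurable f) {y K : ℝ}
    (hK : K ≤ μ.real {ω | y < f ω}) : μ.real {ω | f ω ≤ y} ≤ exp (-K) := by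
  have hcompl : {ω | f ω ≤ y} = {ω | y < f ω}ᶜ := by ext; simp
  rw [hcompl, probReal_compl_eq_one_sub (measurableSet_lt measurable_const hf)]
  linarith [add_one_le_exp (-K)]

end Probability

namespace FDScaling

lemma map_eq {E : Type*} [NormedAddCommGroup E] [MeasurableSpace E] {P : Measure Ω}
    {X : ℝ → Ω → E} {c : ℝ} {T : E → E} (h : FDScaling P X c T)
    (hX : ∀ t, Measurable (X t)) (hT : Measurable T) {t : ℝ} (ht : 0 ≤ t) :
    P.map (X (c * t)) = P.map (fun ω => T (X t ω)) := by
  have h1 := congrArg (Measure.map fun v : Fin 1 → E => v 0) (h 1 (fun _ => t) fun _ => ht)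
  rwa [Measure.map_map (measurable_pi_apply 0) (measurable_pi_lambda _ fun _ => hX _),
    Measure.map_map (measurable_pi_apply 0)
      (measurable_pi_lambda _ fun _ => hT.comp (hX _) : Measurable fun ω (_ : Fin 1) => T (X t ω))]
    at h1

lemma map_pow_eq {P : Measure Ω} {X : ℝ → Ω → ℝ} {c s : ℝ} (h : FDScaling P X c (s * ·))
    (hX : ∀ t, Measurable (X t)) (hc : 0 ≤ c) (n : ℕ) :
    P.map (X (c ^ n)) = P.map (fun ω => s ^ n * X 1 ω) := by
  induction n with
  | zero => simp
  | succ n ih =>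
    have hmul : Measurable (s * · : ℝ → ℝ) := measurable_const_mul s
    rw [pow_succ', h.map_eq hX hmul (by positivity),
      show (fun ω => s * X (c ^ n) ω) = (s * ·) ∘ X (c ^ n) from rfl,
      ← Measure.map_map hmul (hX _), ih, Measure.map_map hmul ((hX 1).const_mul _)]
    congr 1
    ext ω
    simp [pow_succ', mul_assoc]

end FDScaling

namespace IsLevyProcess

variable {P : Measure Ω} {X : ℝ → Ω → ℝ}

lemma identDistrib_increment (hX : IsLevyProcess P X) {s t : ℝ} (hs : 0 ≤ s) (ht : 0 ≤ t) :
    IdentDistrib (fun ω => X (s + t) ω - X s ω) (X t) P P :=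
  ⟨((hX.1 _).sub (hX.1 _)).aemeasurable, (hX.1 t).aemeasurable, hX.2.2.1 s t hs ht⟩

lemma iIndepFun_unit_increments (hX : IsLevyProcess P X) (n : ℕ) :
    iIndepFun (fun (i : Fin n) ω => X (i + 1) ω - X i ω) P := by
  have := hX.2.2.2.1 n (fun i => (i : ℕ)) (by simp) fun _ _ hij => Nat.cast_le.mpr hij
  simpa [Fin.val_succ] using this

lemma sum_unit_increments_ae (hX : IsLevyProcess P X) (n : ℕ) :
    ∀ᵐ ω ∂P, ∑ i : Fin n, (X (i + 1) ω - X i ω) = X n ω := by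
  filter_upwards [hX.2.1] with ω h0
  rw [Fin.sum_univ_eq_sum_range (fun i : ℕ => X (i + 1) ω - X i ω)]
  simpa [h0] using Finset.sum_range_sub (fun i : ℕ => X i ω) n

lemma mgf_natCast (hX : IsLevyProcess P X) (n : ℕ) (u : ℝ) :
    mgf (X n) P u = mgf (X 1) P u ^ n := by
  have hsum : (∑ i : Fin n, fun ω => X (i + 1) ω - X i ω) =ᵐ[P] X n := by
    filter_upwards [hX.sum_unit_increments_ae n] with ω hω
    simpa [Finset.sum_apply] using hω
  rw [← mgf_congr hsum, (hX.iIndepFun_unit_increments n).mgf_sum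
    (fun _ => (hX.1 _).sub (hX.1 _))]
  simp_rw [fun i : Fin n => mgf_congr_of_identDistrib _ _
    (hX.identDistrib_increment (Nat.cast_nonneg (i : ℕ)) zero_le_one) u]
  simp

lemma measure_natCast_mul_lt_le (hX : IsLevyProcess P X) (n : ℕ) (w : ℝ) :
    P {ω | n * w < X n ω} ≤ n * P {ω | w < X 1 ω} := by
  calc P {ω | n * w < X n ω}
      ≤ P (⋃ i : Fin n, {ω | w < X (i + 1) ω - X i ω}) := by
        refine measure_mono_ae ?_
        filter_upwards [hX.sum_unit_increments_ae n] with ω hω hlt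
        refine mem_iUnion.mpr ?_
        by_contra! hmem
        have hle : ∀ i : Fin n, X (i + 1) ω - X i ω ≤ w := fun i => not_lt.mp (hmem i)
        have := Finset.sum_le_sum fun i (_ : i ∈ Finset.univ) => hle i
        simp only [Finset.sum_const, Finset.card_univ, Fintype.card_fin, nsmul_eq_mul] at this
        have hlt' : n * w < X n ω := hlt
        linarith
    _ ≤ ∑ i : Fin n, P {ω | w < X (i + 1) ω - X i ω} := measure_iUnion_fintype_le _ _
    _ = ∑ _i : Fin n, P {ω | w < X 1 ω} := Finset.sum_congr rfl fun i _ =>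
        (hX.identDistrib_increment (Nat.cast_nonneg (i : ℕ)) zero_le_one).measure_mem_eq
          measurableSet_Ioi
    _ = n * P {ω | w < X 1 ω} := by simp

end IsLevyProcess

namespace IsLevyProcess

variable {P : Measure Ω} {X : ℝ → Ω → ℝ} {c s : ℝ}

lemma ae_nonneg (hX : IsLevyProcess P X) (hmono : ∀ᵐ ω ∂P, MonotoneOn (X · ω) (Ici 0))
    {t : ℝ} (ht : 0 ≤ t) : 0 ≤ᵐ[P] X t := by
  filter_upwards [hX.2.1, hmono] with ω h0 hω
  simpa [h0] using hω (mem_Ici.mpr le_rfl) ht ht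

lemma measure_lt_le_ceil_mul (hX : IsLevyProcess P X)
    (hmono : ∀ᵐ ω ∂P, MonotoneOn (X · ω) (Ici 0)) (hscale : FDScaling P X c (s * ·))
    (hc : 0 < c) (hs : 0 < s) (n : ℕ) (y : ℝ) :
    P {ω | y < X 1 ω} ≤ ⌈c ^ n⌉₊ * P {ω | s ^ n * y / ⌈c ^ n⌉₊ < X 1 ω} := by
  set M := ⌈c ^ n⌉₊
  have hM : (M : ℝ) ≠ 0 := by
    have : 0 < M := Nat.ceil_pos.mpr (by positivity)
    positivity
  calc P {ω | y < X 1 ω} = P ((fun ω => s ^ n * X 1 ω) ⁻¹' Ioi (s ^ n * y)) := by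
        congr 1
        ext ω
        simp [mul_lt_mul_iff_right₀ (pow_pos hs n)]
    _ = P {ω | s ^ n * y < X (c ^ n) ω} := by
        rw [← Measure.map_apply ((hX.1 1).const_mul _) measurableSet_Ioi,
          ← hscale.map_pow_eq hX.1 hc.le n, Measure.map_apply (hX.1 _) measurableSet_Ioi]
        rfl
    _ ≤ P {ω | M * (s ^ n * y / M) < X M ω} := by
        rw [mul_div_cancel₀ _ hM]
        refine measure_mono_ae ?_
        filter_upwards [hmono] with ω hω hlt
        exact hlt.trans_le (hω (mem_Ici.mpr (by positivity)) (mem_Ici.mpr (Nat.cast_nonneg _))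
          (Nat.le_ceil _))
    _ ≤ M * P {ω | s ^ n * y / M < X 1 ω} := hX.measure_natCast_mul_lt_le M _

variable [IsProbabilityMeasure P]

lemma mgf_le_pow_floor (hX : IsLevyProcess P X) (hmono : ∀ᵐ ω ∂P, MonotoneOn (X · ω) (Ici 0))
    {t u : ℝ} (ht : 0 ≤ t) (hu : u ≤ 0) : mgf (X t) P u ≤ mgf (X 1) P u ^ ⌊t⌋₊ := by
  rw [← hX.mgf_natCast]
  refine integral_mono_ae
    (integrable_exp_mul_of_nonpos (hX.1 t).aemeasurable (hX.ae_nonneg hmono ht) hu)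
    (integrable_exp_mul_of_nonpos (hX.1 _).aemeasurable
      (hX.ae_nonneg hmono (Nat.cast_nonneg _)) hu) ?_
  filter_upwards [hmono] with ω hω
  exact exp_le_exp.mpr (mul_le_mul_of_nonpos_left
    (hω (mem_Ici.mpr (Nat.cast_nonneg _)) (mem_Ici.mpr ht) (Nat.floor_le ht)) hu)

lemma measureReal_le_le_exp_mul_pow (hX : IsLevyProcess P X)
    (hmono : ∀ᵐ ω ∂P, MonotoneOn (X · ω) (Ici 0)) (hscale : FDScaling P X c (s * ·))
    (hc : 0 ≤ c) (hs : 0 ≤ s) (n : ℕ) (x : ℝ) :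
    P.real {ω | X 1 ω ≤ x} ≤ exp (s ^ n * x) * mgf (X 1) P (-1) ^ ⌊c ^ n⌋₊ := by
  have hu : -s ^ n ≤ 0 := neg_nonpos.mpr (by positivity)
  have hlaw : IdentDistrib (X (c ^ n)) (fun ω => s ^ n * X 1 ω) P P :=
    ⟨(hX.1 _).aemeasurable, ((hX.1 1).const_mul _).aemeasurable, hscale.map_pow_eq hX.1 hc n⟩
  calc P.real {ω | X 1 ω ≤ x}
      ≤ exp (s ^ n * x) * mgf (X 1) P (-s ^ n) := by
        simpa using measure_le_le_exp_mul_mgf x hu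
          (integrable_exp_mul_of_nonpos (hX.1 1).aemeasurable (hX.ae_nonneg hmono zero_le_one) hu)
    _ = exp (s ^ n * x) * mgf (X (c ^ n)) P (-1) := by
        rw [mgf_congr_identDistrib hlaw, mgf_const_mul, mul_neg_one]
    _ ≤ exp (s ^ n * x) * mgf (X 1) P (-1) ^ ⌊c ^ n⌋₊ := by
        gcongr
        exact hX.mgf_le_pow_floor hmono (by positivity) (by norm_num)

variable {b γ : ℝ}

lemma exists_measureReal_le_le_exp_near_zero (hX : IsLevyProcess P X)
    (hmono : ∀ᵐ ω ∂P, MonotoneOn (X · ω) (Ici 0)) (hpos : ∀ᵐ ω ∂P, 0 < X 1 ω)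
    (hscale : FDScaling P X c (c * b * ·)) (hb : 1 < b) (hγ : 0 < γ) (hbγ : b ^ γ = c) :
    ∃ K > 0, ∃ x₁ > 0, ∀ x ∈ Ioc 0 x₁, P.real {ω | X 1 ω ≤ x} ≤ exp (-(K * x ^ (-γ))) := by
  have hc : 1 < c := hbγ ▸ one_lt_rpow hb hγ
  set p := mgf (X 1) P (-1)
  have hp0 : 0 < p := mgf_pos (integrable_exp_mul_of_nonpos (hX.1 1).aemeasurable
    (hX.ae_nonneg hmono zero_le_one) (by norm_num))
  set κ := -log p
  have hκ : 0 < κ :=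
    neg_pos.mpr (log_neg hp0 (mgf_lt_one (hX.1 1).aemeasurable hpos (by norm_num)))
  refine ⟨κ / (4 * c) * (κ / 4) ^ γ, by positivity, κ / 4, by positivity, fun x hx => ?_⟩
  obtain ⟨n, hn⟩ := exists_pow_mul_sub_floor_le hb hγ hbγ hx.1 hx.2
  have hpow : p ^ ⌊c ^ n⌋₊ = exp (-(κ * ⌊c ^ n⌋₊)) := by
    rw [← exp_log hp0, ← exp_nat_mul]
    congr 1
    simp only [κ]
    ring
  calc P.real {ω | X 1 ω ≤ x} ≤ exp ((c * b) ^ n * x) * p ^ ⌊c ^ n⌋₊ :=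
        hX.measureReal_le_le_exp_mul_pow hmono hscale (by positivity) (by positivity) n x
    _ = exp ((c * b) ^ n * x - κ * ⌊c ^ n⌋₊) := by
        rw [hpow, ← exp_add, sub_eq_add_neg]
    _ ≤ exp (-(κ / (4 * c) * (κ / 4) ^ γ * x ^ (-γ))) := exp_le_exp.mpr hn

lemma exists_mul_rpow_neg_le_measureReal_lt (hX : IsLevyProcess P X)
    (hmono : ∀ᵐ ω ∂P, MonotoneOn (X · ω) (Ici 0)) (hpos : ∀ᵐ ω ∂P, 0 < X 1 ω)
    (hscale : FDScaling P X c (c * b * ·)) (hb : 1 < b) (hγ : 0 < γ) (hbγ : b ^ γ = c)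
    {x₁ : ℝ} (hx₁ : 0 < x₁) :
    ∃ K > 0, ∀ y, x₁ ≤ y → K * y ^ (-γ) ≤ P.real {ω | y < X 1 ω} := by
  have hc : 1 < c := hbγ ▸ one_lt_rpow hb hγ
  obtain ⟨y₀, hy₀, hρ⟩ := exists_measure_lt_pos hpos (by positivity : 0 < 2 * x₁)
  set ρ := P.real {ω | y₀ < X 1 ω}
  have hρ' : 0 < ρ := ENNReal.toReal_pos hρ.ne' (measure_ne_top _ _)
  refine ⟨ρ / (2 * c * (2 / y₀) ^ γ), by have := hy₀.1; positivity, fun y hy => ?_⟩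
  have hy0 : 0 < y := hx₁.trans_le hy
  obtain ⟨n, hlt, hM⟩ :=
    exists_lt_pow_mul_div_ceil hb hγ hbγ hy₀.1 (y := y) (by linarith [hy₀.2])
  have hρM : ρ ≤ ⌈c ^ n⌉₊ * P.real {ω | y < X 1 ω} := by
    have : P {ω | y₀ < X 1 ω} ≤ ⌈c ^ n⌉₊ * P {ω | y < X 1 ω} :=
      (hX.measure_lt_le_ceil_mul hmono hscale (by positivity) (by positivity) n y₀).trans
        (by gcongr)
    simpa [ρ, measureReal_def, ENNReal.toReal_mul] using
      ENNReal.toReal_mono (ENNReal.mul_ne_top (by simp) (measure_ne_top _ _)) this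
  have hC : 0 < 2 * c * (2 / y₀) ^ γ * y ^ γ := by have := hy₀.1; positivity
  rw [rpow_neg hy0.le, ← div_eq_mul_inv, div_div, div_le_iff₀ hC]
  calc ρ ≤ ⌈c ^ n⌉₊ * P.real {ω | y < X 1 ω} := hρM
    _ ≤ 2 * c * (2 / y₀) ^ γ * y ^ γ * P.real {ω | y < X 1 ω} := by gcongr
    _ = _ := by ring

lemma exists_measureReal_le_le_exp (hX : IsLevyProcess P X)
    (hmono : ∀ᵐ ω ∂P, MonotoneOn (X · ω) (Ici 0)) (hpos : ∀ᵐ ω ∂P, 0 < X 1 ω)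
    (hscale : FDScaling P X c (c * b * ·)) (hb : 1 < b) (hγ : 0 < γ) (hbγ : b ^ γ = c) :
    ∃ K > 0, ∀ x > 0, P.real {ω | X 1 ω ≤ x} ≤ exp (-(K * x ^ (-γ))) := by
  obtain ⟨K₁, hK₁, x₁, hx₁, hsmall⟩ :=
    hX.exists_measureReal_le_le_exp_near_zero hmono hpos hscale hb hγ hbγ
  obtain ⟨K₂, hK₂, htail⟩ :=
    hX.exists_mul_rpow_neg_le_measureReal_lt hmono hpos hscale hb hγ hbγ hx₁
  refine ⟨min K₁ K₂, lt_min hK₁ hK₂, fun x hx => ?_⟩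
  have hxγ : 0 ≤ x ^ (-γ) := rpow_nonneg hx.le _
  rcases le_total x x₁ with h | h
  · exact (hsmall x ⟨hx, h⟩).trans (by gcongr; exact min_le_left _ _)
  · exact (measureReal_le_le_exp_neg (hX.1 1) (htail x h)).trans
      (by gcongr; exact min_le_right _ _)

end IsLevyProcess

/-- Small-ball estimate for a `(c^{1/α},c)`-semistable subordinator:
`P(X(r) ≤ x) ≤ exp(-K x^{-α/(1-α)})` uniformly for `r ∈ [1,c]`. -/
theorem semistable_subordinator_small_ball (P : Measure Ω) [IsProbabilityMeasure P]
    (X : ℝ → Ω → ℝ) (α c : ℝ) (hα0 : 0 < α) (hα1 : α < 1) (hc : 1 < c)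
    (hlevy : IsLevyProcess P X)
    (hinc : ∀ᵐ ω ∂P, ∀ s t : ℝ, 0 ≤ s → s < t → X s ω < X t ω)
    (hscale : FDScaling P X c (fun x => c ^ (α⁻¹) * x)) :
    ∃ K : ℝ, 0 < K ∧ ∀ r ∈ Set.Icc (1:ℝ) c, ∀ x : ℝ, 0 < x →
      P {ω | X r ω ≤ x} ≤ ENNReal.ofReal (Real.exp (-(K * x ^ (-(α / (1 - α)))))) := by
  have hstrict : ∀ᵐ ω ∂P, StrictMonoOn (X · ω) (Ici 0) :=
    hinc.mono fun ω h s hs t _ hst => h s t hs hst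
  have hpos : ∀ᵐ ω ∂P, 0 < X 1 ω := by
    filter_upwards [hlevy.2.1, hstrict] with ω h0 h
    simpa [h0] using h (mem_Ici.mpr le_rfl) (mem_Ici.mpr zero_le_one) one_pos
  have hb : 1 < c ^ (α⁻¹ - 1) := one_lt_rpow hc (sub_pos.mpr ((one_lt_inv₀ hα0).mpr hα1))
  have hbγ : (c ^ (α⁻¹ - 1)) ^ (α / (1 - α)) = c := by
    rw [← rpow_mul (by positivity)]
    convert rpow_one c using 2
    field_simp
    exact div_self (by linarith)
  have hs : c ^ α⁻¹ = c * c ^ (α⁻¹ - 1) := by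
    rw [rpow_sub_one (by positivity), mul_div_cancel₀ _ (by positivity)]
  rw [hs] at hscale
  obtain ⟨K, hK, hX₁⟩ := hlevy.exists_measureReal_le_le_exp
    (hstrict.mono fun _ h => h.monotoneOn) hpos hscale hb (div_pos hα0 (by linarith)) hbγ
  refine ⟨K, hK, fun r hr x hx => ?_⟩
  rw [ENNReal.le_ofReal_iff_toReal_le (measure_ne_top _ _) (exp_pos _).le]
  refine (ENNReal.toReal_mono (measure_ne_top _ _) (measure_mono_ae ?_)).trans (hX₁ x hx)
  filter_upwards [hstrict] with ω hω hle
  exact (hω.monotoneOn (mem_Ici.mpr zero_le_one) (mem_Ici.mpr (by linarith [hr.1])) hr.1).trans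
    hle
end
end

section
/- Let $g:(0,\infty)\to[0,1]$ be nonincreasing with $g(1)>0$, and suppose $h=\log g$ satisfies $h(x_k)\ge k\,h(1)$ for the sequence $x_k=k^{1-1/\alpha}c^{1/\alpha}$, where $0<\alpha<1$ and $c>1$. Then there exist constants $K>0$ and $\lambda_0>0$ such that $g(\lambda)\ge\exp\big(-K\lambda^{-\alpha/(1-\alpha)}\big)$ for all $0<\lambda<\lambda_0$. -/
/-!
With `β = α / (1 - α)` and `γ = c ^ (1 / (1 - α))` the sequence is `x_k = (k / γ) ^ (-β)⁻¹`,
i.e. `k = γ x_k ^ (-β)`. For small `λ` take `k = ⌊γ λ ^ (-β)⌋₊`: then `γ ≤ k`, so `λ ≤ x_k ≤ 1`,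
and monotonicity gives `g λ ≥ g x_k ≥ g 1 ^ k ≥ exp (-K λ ^ (-β))` since `k ≤ γ λ ^ (-β)`.
-/

open Real

lemma rpow_one_sub_inv_mul_rpow_inv_eq {α c k : ℝ} (hα0 : 0 < α) (hα1 : α < 1) (hc : 0 < c)
    (hk : 0 ≤ k) :
    k ^ (1 - 1 / α) * c ^ (1 / α) = (k / c ^ (1 / (1 - α))) ^ (-(α / (1 - α)))⁻¹ := by
  have h1α : 1 - α ≠ 0 := by linarith
  have hexp : (-(α / (1 - α)))⁻¹ = 1 - 1 / α := by field_simp; ring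
  rw [hexp, div_rpow hk (by positivity), ← rpow_mul hc.le, div_eq_mul_inv (k ^ _),
    ← rpow_neg hc.le]
  congr 2
  field_simp
  ring

lemma le_natFloor_mul {γ t : ℝ} (hγ : 1 ≤ γ) (ht : 2 ≤ t) : γ ≤ ⌊γ * t⌋₊ := by
  have := Nat.sub_one_lt_floor (γ * t)
  nlinarith

lemma two_lt_rpow_neg {β lam : ℝ} (hβ : 0 < β) (hlam : 0 < lam) (hlam0 : lam < (1 / 2) ^ β⁻¹) :
    2 < lam ^ (-β) := by
  rw [lt_rpow_inv_iff_of_pos hlam.le (by norm_num) hβ] at hlam0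
  rw [rpow_neg hlam.le, lt_inv_comm₀ (by norm_num) (by positivity)]
  simpa using hlam0

theorem interpolation_step_general (g : ℝ → ℝ) (α c : ℝ)
    (hα0 : 0 < α) (hα1 : α < 1) (hc : 1 < c)
    (hmono : AntitoneOn g (Set.Ioi (0:ℝ)))
    (hg1 : 0 < g 1)
    (hsub : ∀ k : ℕ, 1 ≤ k →
      (k : ℝ) * Real.log (g 1) ≤ Real.log (g ((k : ℝ) ^ (1 - 1 / α) * c ^ (1 / α)))) :
    ∃ K lam0 : ℝ, 0 < K ∧ 0 < lam0 ∧ ∀ lam : ℝ, 0 < lam → lam < lam0 →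
      Real.exp (-(K * lam ^ (-(α / (1 - α))))) ≤ g lam := by
  set β := α / (1 - α)
  have hβ : 0 < β := div_pos hα0 (by linarith)
  set γ := c ^ (1 / (1 - α))
  have hγ : 1 < γ := one_lt_rpow hc (by bound)
  set L := log (g 1)
  refine ⟨γ * |L| + 1, (1 / 2) ^ β⁻¹, by positivity, by positivity, fun lam hlam hlam0 => ?_⟩
  set t := lam ^ (-β)
  set k := ⌊γ * t⌋₊
  have hγk : γ ≤ k := le_natFloor_mul hγ.le (two_lt_rpow_neg hβ hlam hlam0).le
  have hkt : (k : ℝ) ≤ γ * t := Nat.floor_le (by positivity)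
  have hk : 1 ≤ k := by exact_mod_cast hγ.le.trans hγk
  have hsubk := hsub k hk
  rw [rpow_one_sub_inv_mul_rpow_inv_eq hα0 hα1 (by positivity) k.cast_nonneg] at hsubk
  set s := (k : ℝ) / γ
  have hs : 0 < s := by positivity
  have hlam_le : lam ≤ s ^ (-β)⁻¹ :=
    (le_rpow_inv_iff_of_neg hlam hs (by linarith)).2 ((div_le_iff₀' (by positivity)).2 hkt)
  have hle_one : s ^ (-β)⁻¹ ≤ 1 :=
    rpow_le_one_of_one_le_of_nonpos ((one_le_div₀ (by positivity)).2 hγk) (inv_nonpos.2 (by linarith))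
  have hxk : 0 < s ^ (-β)⁻¹ := rpow_pos_of_pos hs _
  calc exp (-((γ * |L| + 1) * t)) ≤ exp (k * L) := by
        gcongr
        nlinarith [neg_abs_le L, abs_nonneg L, k.cast_nonneg (α := ℝ), rpow_pos_of_pos hlam (-β)]
    _ ≤ g (s ^ (-β)⁻¹) :=
        (le_log_iff_exp_le (hg1.trans_le (hmono hxk (Set.mem_Ioi.2 one_pos) hle_one))).1 hsubk
    _ ≤ g lam := hmono hlam hxk hlam_le

/-- Abstract interpolation step: if a nonincreasing `g : (0,∞) → [0,1]` with `g(1) > 0`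
satisfies `log g(x_k) ≥ k log g(1)` along `x_k = k^{1-1/α} c^{1/α}`, then
`g(λ) ≥ exp(-K λ^{-α/(1-α)})` for all small `λ > 0`. -/
theorem interpolation_step (g : ℝ → ℝ) (α c : ℝ)
    (hα0 : 0 < α) (hα1 : α < 1) (hc : 1 < c)
    (hmono : AntitoneOn g (Set.Ioi (0:ℝ)))
    (hrange : ∀ x : ℝ, 0 < x → 0 ≤ g x ∧ g x ≤ 1)
    (hg1 : 0 < g 1)
    (hsub : ∀ k : ℕ, 1 ≤ k →
      (k : ℝ) * Real.log (g 1) ≤ Real.log (g ((k : ℝ) ^ (1 - 1 / α) * c ^ (1 / α)))) :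
    ∃ K lam0 : ℝ, 0 < K ∧ 0 < lam0 ∧ ∀ lam : ℝ, 0 < lam → lam < lam0 →
      Real.exp (-(K * lam ^ (-(α / (1 - α))))) ≤ g lam :=
  interpolation_step_general g α c hα0 hα1 hc hmono hg1 hsub
end
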